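/- arXiv:1811.06821 — 4 statements merged into one kernel-verified Lean document; each statement's English description precedes it below -/
import Mathlib

section
/- For every k-tangle τ in a finite graph G and distinct maximal elements (A,B), (C,D) of τ (maximal with respect to the partial order (A,B) ≤ (C,D) iff A ⊆ C and D ⊆ B), one has |B ∩ (C ∩ D)| + |D ∩ (A ∩ B)| > |A ∩ (C ∩ D)| + |C ∩ (A ∩ B)|. -/
open Finset

variable {V : Type*} [Fintype V] [DecidableEq V]

/-- `(A,B)` is a separation of the graph `G`: `A ∪ B = V` and no edge joins
`A \ B` to `B \ A`. -/
def IsSep (G : SimpleGraph V) (A B : Finset V) : Prop :=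
  A ∪ B = Finset.univ ∧ ∀ a ∈ A \ B, ∀ b ∈ B \ A, ¬ G.Adj a b

/-- `G = G[A₁] ∪ G[A₂] ∪ G[A₃]`: the three sets cover the vertices and every
edge of `G` has both endpoints inside some `Aᵢ`. -/
def CoversGraph (G : SimpleGraph V) (A₁ A₂ A₃ : Finset V) : Prop :=
  A₁ ∪ A₂ ∪ A₃ = Finset.univ ∧
  ∀ a b, G.Adj a b →
    (a ∈ A₁ ∧ b ∈ A₁) ∨ (a ∈ A₂ ∧ b ∈ A₂) ∨ (a ∈ A₃ ∧ b ∈ A₃)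

/-- `τ` is a `k`-tangle in `G`: it contains exactly one orientation of every
separation of order `< k`, contains only such separations, and no three small
sides of members of `τ` cover `G`. -/
def IsTangle (G : SimpleGraph V) (k : ℕ) (τ : Set (Finset V × Finset V)) : Prop :=
  (∀ A B : Finset V, IsSep G A B → (A ∩ B).card < k → ((A, B) ∈ τ ↔ (B, A) ∉ τ)) ∧
  (∀ p ∈ τ, IsSep G p.1 p.2 ∧ (p.1 ∩ p.2).card < k) ∧
  (∀ p₁ ∈ τ, ∀ p₂ ∈ τ, ∀ p₃ ∈ τ,
    ¬ CoversGraph G (Prod.fst p₁) (Prod.fst p₂) (Prod.fst p₃))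

/-- The partial order on separations: `(A,B) ≤ (C,D)` iff `A ⊆ C` and `D ⊆ B`. -/
def SepLE (p q : Finset V × Finset V) : Prop := p.1 ⊆ q.1 ∧ q.2 ⊆ p.2

/-- `p` is a maximal element of `τ` with respect to `SepLE`. -/
def MaximalIn (τ : Set (Finset V × Finset V)) (p : Finset V × Finset V) : Prop :=
  p ∈ τ ∧ ∀ q ∈ τ, SepLE p q → q = p


private lemma edge_side {V : Type*} [Fintype V] [DecidableEq V] {G : SimpleGraph V}
    {A B : Finset V} (h : IsSep G A B) {a b : V} (hab : G.Adj a b) :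
    (a ∈ A ∧ b ∈ A) ∨ (a ∈ B ∧ b ∈ B) := by
  obtain ⟨hu, hs⟩ := h
  have ha : a ∈ A ∨ a ∈ B := by
    have := Finset.mem_univ a; rw [← hu] at this; simpa using this
  have hb : b ∈ A ∨ b ∈ B := by
    have := Finset.mem_univ b; rw [← hu] at this; simpa using this
  by_cases haA : a ∈ A <;> by_cases haB : a ∈ B <;>
    by_cases hbA : b ∈ A <;> by_cases hbB : b ∈ B <;>
    first
      | tauto
      | exact absurd hab (hs a (Finset.mem_sdiff.mpr ⟨haA, haB⟩) b (Finset.mem_sdiff.mpr ⟨hbB, hbA⟩))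
      | exact absurd hab.symm (hs b (Finset.mem_sdiff.mpr ⟨hbA, hbB⟩) a (Finset.mem_sdiff.mpr ⟨haB, haA⟩))

theorem stmt0 {V : Type*} [Fintype V] [DecidableEq V] (G : SimpleGraph V) (k : ℕ)
    (τ : Set (Finset V × Finset V)) (hτ : IsTangle G k τ)
    (A B C D : Finset V) (hAB : MaximalIn τ (A, B)) (hCD : MaximalIn τ (C, D))
    (hne : (A, B) ≠ (C, D)) :
    (A ∩ (C ∩ D)).card + (C ∩ (A ∩ B)).card
      < (B ∩ (C ∩ D)).card + (D ∩ (A ∩ B)).card := by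
  obtain ⟨hτ1, hτ2, hτ3⟩ := hτ
  have hABτ := hAB.1
  have hCDτ := hCD.1
  obtain ⟨hsAB, hoAB⟩ := hτ2 _ hABτ
  obtain ⟨hsCD, hoCD⟩ := hτ2 _ hCDτ
  simp only at hsAB hoAB hsCD hoCD
  have hsep : IsSep G (A ∪ C) (B ∩ D) := by
    constructor
    · apply Finset.eq_univ_of_forall; intro x
      have hx1 : x ∈ A ∪ B := by rw [hsAB.1]; exact Finset.mem_univ x
      have hx2 : x ∈ C ∪ D := by rw [hsCD.1]; exact Finset.mem_univ x
      simp at hx1 hx2 ⊢; tauto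
    · intro a ha b hb hadj
      simp at ha hb
      rcases edge_side hsAB hadj with ⟨h1, h2⟩ | ⟨h1, h2⟩ <;>
        rcases edge_side hsCD hadj with ⟨h3, h4⟩ | ⟨h3, h4⟩ <;> tauto
  have key : k ≤ ((A ∪ C) ∩ (B ∩ D)).card := by
    by_contra hlt
    push_neg at hlt
    have hiff := hτ1 _ _ hsep hlt
    by_cases hin : ((A ∪ C, B ∩ D) : Finset V × Finset V) ∈ τ
    · have h1 := hAB.2 _ hin ⟨Finset.subset_union_left, Finset.inter_subset_left⟩
      have h2 := hCD.2 _ hin ⟨Finset.subset_union_right, Finset.inter_subset_right⟩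
      exact hne (h1.symm.trans h2)
    · have hin' : ((B ∩ D, A ∪ C) : Finset V × Finset V) ∈ τ := by
        by_contra hno; exact hin (hiff.mpr hno)
      apply hτ3 _ hin' _ hABτ _ hCDτ
      constructor
      · apply Finset.eq_univ_of_forall; intro x
        have hx1 : x ∈ A ∪ B := by rw [hsAB.1]; exact Finset.mem_univ x
        have hx2 : x ∈ C ∪ D := by rw [hsCD.1]; exact Finset.mem_univ x
        simp at hx1 hx2 ⊢; tauto
      · intro a b hadj
        rcases edge_side hsAB hadj with ⟨h1, h2⟩ | ⟨h1, h2⟩ <;>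
          rcases edge_side hsCD hadj with ⟨h3, h4⟩ | ⟨h3, h4⟩ <;> simp <;> tauto
  -- arithmetic
  have s0 : (A ∪ C) ∩ (B ∩ D) = (A ∩ (B ∩ D)) ∪ (C ∩ (B ∩ D)) := by ext x; simp; tauto
  have s0i : (A ∩ (B ∩ D)) ∩ (C ∩ (B ∩ D)) = A ∩ B ∩ C ∩ D := by ext x; simp; tauto
  have s1 : A ∩ B = (A ∩ B ∩ C) ∪ (A ∩ (B ∩ D)) := by
    have hx2 : ∀ x : V, x ∈ C ∪ D := by intro x; rw [hsCD.1]; exact Finset.mem_univ x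
    ext x; have := hx2 x; simp at this ⊢; tauto
  have s1i : (A ∩ B ∩ C) ∩ (A ∩ (B ∩ D)) = A ∩ B ∩ C ∩ D := by ext x; simp; tauto
  have s2 : C ∩ D = (A ∩ (C ∩ D)) ∪ (C ∩ (B ∩ D)) := by
    have hx1 : ∀ x : V, x ∈ A ∪ B := by intro x; rw [hsAB.1]; exact Finset.mem_univ x
    ext x; have := hx1 x; simp at this ⊢; tauto
  have s2i : (A ∩ (C ∩ D)) ∩ (C ∩ (B ∩ D)) = A ∩ B ∩ C ∩ D := by ext x; simp; tauto
  have t1 : C ∩ (A ∩ B) = A ∩ B ∩ C := by ext x; simp; tauto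
  have t2 : B ∩ (C ∩ D) = C ∩ (B ∩ D) := by ext x; simp; tauto
  have t3 : D ∩ (A ∩ B) = A ∩ (B ∩ D) := by ext x; simp; tauto
  have c0 := Finset.card_union_add_card_inter (A ∩ (B ∩ D)) (C ∩ (B ∩ D))
  rw [← s0, s0i] at c0
  have c1 := Finset.card_union_add_card_inter (A ∩ B ∩ C) (A ∩ (B ∩ D))
  rw [← s1, s1i] at c1
  have c2 := Finset.card_union_add_card_inter (A ∩ (C ∩ D)) (C ∩ (B ∩ D))
  rw [← s2, s2i] at c2
  rw [t1, t2, t3]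
  omega
end

section
/- Let K ∈ ℝ^{n×n} be a skew-symmetric matrix (Kᵀ = −K). Then there exists a vector x ∈ ℝⁿ with Kx ≥ 0 (entrywise), x ≥ 0 (entrywise), and x + Kx > 0 (entrywise). -/
/-!
Farkas' lemma, proved by induction on the number of generators: if a separating functional `y`
for the first generators is negative on the new generator `u`, project everything along `u` onto
`ker y` and apply the induction hypothesis there.

For each index `p`, Farkas' lemma applied to the rows of `K`, the unit vectors and `-e p` gives
either `a, r ≥ 0` with `aᵀK + r = -e p`, whence `K a = r + e p` by skew-symmetry, or `y ≥ 0`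
with `K y ≥ 0` and `y p > 0`. Either way some `x ≥ 0` with `K x ≥ 0` has `x p + (K x) p > 0`,
and the sum of these vectors over all `p` is the required solution.
-/

open Finset Matrix Module

lemma Finset.sum_insert_update_smul {R V ι : Type*} [Semiring R] [AddCommMonoid V] [Module R V]
    [DecidableEq ι] {s : Finset ι} {a : ι} (ha : a ∉ s) (c : ι → R) (t : R) (v : ι → V) :
    ∑ i ∈ insert a s, Function.update c a t i • v i = t • v a + ∑ i ∈ s, c i • v i := by
  rw [sum_insert ha, Function.update_self]
  congr 1
  refine sum_congr rfl fun i hi => ?_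
  rw [Function.update_of_ne (ne_of_mem_of_not_mem hi ha)]

lemma Finset.forall_mem_insert_update_nonneg {α ι : Type*} [Zero α] [Preorder α] [DecidableEq ι]
    {s : Finset ι} {a : ι} {c : ι → α} {t : α}
    (hc : ∀ i ∈ s, 0 ≤ c i) (ht : 0 ≤ t) : ∀ i ∈ insert a s, 0 ≤ Function.update c a t i := by
  simp only [mem_insert, forall_eq_or_imp, Function.update_self]
  refine ⟨ht, fun i hi => ?_⟩
  rcases eq_or_ne i a with rfl | hia
  · simpa using ht
  · simpa [hia] using hc i hi

section Farkas

variable {𝕜 V ι : Type*} [Field 𝕜] [LinearOrder 𝕜] [IsStrictOrderedRing 𝕜]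
  [AddCommGroup V] [Module 𝕜 V] [DecidableEq ι]

theorem exists_nonneg_sum_eq_or_exists_dual_neg (s : Finset ι) (v : ι → V) (b : V) :
    (∃ c : ι → 𝕜, (∀ i ∈ s, 0 ≤ c i) ∧ ∑ i ∈ s, c i • v i = b) ∨
      ∃ f : Dual 𝕜 V, (∀ i ∈ s, 0 ≤ f (v i)) ∧ f b < 0 := by
  induction s using Finset.induction_on generalizing v b with
  | empty =>
    by_cases hb : b = 0
    · exact .inl ⟨0, by simp, by simp [hb]⟩
    · obtain ⟨f, hf⟩ := Projective.exists_dual_eq_one 𝕜 hb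
      exact .inr ⟨-f, by simp, by simp [hf]⟩
  | insert a s ha ih =>
    obtain ⟨c, hc, hcb⟩ | ⟨y, hy, hyb⟩ := ih v b
    · exact .inl ⟨Function.update c a 0, forall_mem_insert_update_nonneg hc le_rfl,
        by rw [sum_insert_update_smul ha, zero_smul, zero_add, hcb]⟩
    by_cases hya : 0 ≤ y (v a)
    · exact .inr ⟨y, by simpa [hya] using hy, hyb⟩
    replace hya := not_le.mp hya
    obtain ⟨c, hc, hcb⟩ | ⟨z, hz, hzb⟩ :=
      ih (fun i => y (v a) • v i - y (v i) • v a) (y (v a) • b - y b • v a)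
    · set S := ∑ i ∈ s, c i * y (v i)
      have hS : 0 ≤ S := sum_nonneg fun i hi => mul_nonneg (hc i hi) (hy i hi)
      refine .inl ⟨Function.update c a ((y b - S) / y (v a)),
        forall_mem_insert_update_nonneg hc (div_nonneg_of_nonpos (by linarith) hya.le), ?_⟩
      rw [sum_insert_update_smul ha]
      refine smul_right_injective V hya.ne ?_
      have hsum : ∑ i ∈ s, c i • (y (v a) • v i - y (v i) • v a) =
          y (v a) • ∑ i ∈ s, c i • v i - S • v a := by
        rw [smul_sum, sum_smul, ← sum_sub_distrib]
        exact sum_congr rfl fun i _ => by module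
      simp only [smul_add, smul_smul, mul_div_cancel₀ _ hya.ne]
      rw [hsum] at hcb
      linear_combination (norm := module) hcb
    · have hzy : ∀ x, (y (v a) • z - z (v a) • y) x = z (y (v a) • x - y x • v a) := fun x => by
        simp only [LinearMap.sub_apply, LinearMap.smul_apply, map_sub, map_smul, smul_eq_mul]
        ring
      refine .inr ⟨y (v a) • z - z (v a) • y, ?_, by rw [hzy]; exact hzb⟩
      simp only [mem_insert, forall_eq_or_imp, hzy, sub_self, map_zero, le_refl, true_and]
      exact hz

end Farkas

namespace Matrix

variable {𝕜 ι : Type*} [Field 𝕜] [LinearOrder 𝕜] [IsStrictOrderedRing 𝕜] [Fintype ι]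
  [DecidableEq ι] {K : Matrix ι ι 𝕜}

theorem exists_nonneg_mulVec_nonneg_add_pos_at_of_transpose_eq_neg (hK : Kᵀ = -K) (p : ι) :
    ∃ x : ι → 𝕜, 0 ≤ x ∧ 0 ≤ K *ᵥ x ∧ 0 < x p + (K *ᵥ x) p := by
  obtain ⟨c, hc, hcb⟩ | ⟨f, hf, hfb⟩ := exists_nonneg_sum_eq_or_exists_dual_neg (𝕜 := 𝕜) univ
    (Sum.elim (fun j => K j) fun k => Pi.single k 1) (-Pi.single p (1 : 𝕜))
  · set a : ι → 𝕜 := fun j => c (.inl j)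
    set r : ι → 𝕜 := fun k => c (.inr k)
    have ha : 0 ≤ a := fun j => hc _ (mem_univ _)
    have hr : 0 ≤ r := fun k => hc _ (mem_univ _)
    have hKa : K *ᵥ a = r + Pi.single p 1 := by
      rw [Fintype.sum_sum_type] at hcb
      simp only [Sum.elim_inl, Sum.elim_inr] at hcb
      rw [← vecMul_eq_sum, ← mulVec_transpose, hK, neg_mulVec, ← pi_eq_sum_univ' r] at hcb
      linear_combination (norm := module) -hcb
    refine ⟨a, ha, ?_, ?_⟩
    · rw [hKa]
      exact add_nonneg hr (Pi.single_nonneg.mpr zero_le_one)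
    · rw [hKa, Pi.add_apply, Pi.single_eq_same]
      exact add_pos_of_nonneg_of_pos (ha p) (add_pos_of_nonneg_of_pos (hr p) one_pos)
  · obtain ⟨y, rfl⟩ := (dotProductEquiv 𝕜 ι).surjective f
    have hy : 0 ≤ y := fun k => by simpa using hf (.inr k) (mem_univ _)
    have hKy : 0 ≤ K *ᵥ y := fun j => by
      simpa [mulVec, dotProduct_comm] using hf (.inl j) (mem_univ _)
    have hyp : 0 < y p := by simpa using hfb
    exact ⟨y, hy, hKy, add_pos_of_pos_of_nonneg hyp (hKy p)⟩

theorem exists_nonneg_mulVec_nonneg_add_pos_of_transpose_eq_neg (hK : Kᵀ = -K) :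
    ∃ x : ι → 𝕜, 0 ≤ x ∧ 0 ≤ K *ᵥ x ∧ ∀ i, 0 < x i + (K *ᵥ x) i := by
  choose x hx hKx hpos using exists_nonneg_mulVec_nonneg_add_pos_at_of_transpose_eq_neg hK
  refine ⟨∑ p, x p, sum_nonneg fun p _ => hx p, ?_, fun i => ?_⟩
  · rw [mulVec_sum]
    exact sum_nonneg fun p _ => hKx p
  · rw [mulVec_sum, Finset.sum_apply, Finset.sum_apply, ← sum_add_distrib]
    exact sum_pos' (fun p _ => add_nonneg (hx p i) (hKx p i)) ⟨i, mem_univ i, hpos i⟩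

end Matrix

theorem stmt1 (n : ℕ) (K : Matrix (Fin n) (Fin n) ℝ) (hK : K.transpose = -K) :
    ∃ x : Fin n → ℝ,
      (∀ i, 0 ≤ K.mulVec x i) ∧ (∀ i, 0 ≤ x i) ∧ (∀ i, 0 < x i + K.mulVec x i) := by
  obtain ⟨x, hx, hKx, hpos⟩ := exists_nonneg_mulVec_nonneg_add_pos_of_transpose_eq_neg hK
  exact ⟨x, hKx, hx, hpos⟩
end

section
/- Let G be a finite graph, τ a k-tangle in G, and w : V(G) → ℝ≥0 a weight function such that w(A) < w(B) for every maximal element (A,B) of τ (with respect to the order (A,B) ≤ (C,D) iff A ⊆ C and D ⊆ B). Then for every separation (C,D) of order < k, (C,D) ∈ τ if and only if w(C) < w(D). -/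
open Finset

variable {V : Type*} [Fintype V] [DecidableEq V]

-- `SepLE` is the product order on the finite type `Finset V × (Finset V)ᵒᵈ`.
lemma exists_maximalIn_of_mem {V : Type*} [Finite V] {τ : Set (Finset V × Finset V)}
    {p : Finset V × Finset V} (hp : p ∈ τ) : ∃ q, MaximalIn τ q ∧ SepLE p q := by
  obtain ⟨⟨A, B⟩, hpAB, hAB⟩ := Finite.exists_le_maximal
    (p := fun x : Finset V × (Finset V)ᵒᵈ => (x.1, OrderDual.ofDual x.2) ∈ τ)
    (a := (p.1, OrderDual.toDual p.2)) hp
  refine ⟨(A, OrderDual.ofDual B), ⟨hAB.1, fun q hq hABq => ?_⟩, hpAB⟩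
  have hqAB := hAB.2 (y := (q.1, OrderDual.toDual q.2)) hq hABq
  exact Prod.ext (le_antisymm hqAB.1 hABq.1) (le_antisymm hABq.2 hqAB.2)

lemma sum_fst_lt_sum_snd_of_mem {V M : Type*} [Finite V] [AddCommMonoid M] [PartialOrder M]
    [IsOrderedAddMonoid M] {τ : Set (Finset V × Finset V)} {w : V → M} (hw : ∀ v, 0 ≤ w v)
    (hmax : ∀ A B : Finset V, MaximalIn τ (A, B) → ∑ a ∈ A, w a < ∑ b ∈ B, w b)
    {p : Finset V × Finset V} (hp : p ∈ τ) : ∑ a ∈ p.1, w a < ∑ b ∈ p.2, w b := by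
  obtain ⟨⟨A, B⟩, hAB, hpAB⟩ := exists_maximalIn_of_mem hp
  calc ∑ a ∈ p.1, w a ≤ ∑ a ∈ A, w a := sum_le_sum_of_subset_of_nonneg hpAB.1 fun v _ _ => hw v
    _ < ∑ b ∈ B, w b := hmax A B hAB
    _ ≤ ∑ b ∈ p.2, w b := sum_le_sum_of_subset_of_nonneg hpAB.2 fun v _ _ => hw v

theorem stmt3 {V : Type*} [Fintype V] [DecidableEq V] (G : SimpleGraph V) (k : ℕ)
    (τ : Set (Finset V × Finset V)) (hτ : IsTangle G k τ)
    (w : V → ℝ) (hw : ∀ v, 0 ≤ w v)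
    (hmax : ∀ A B : Finset V, MaximalIn τ (A, B) → ∑ a ∈ A, w a < ∑ b ∈ B, w b)
    (C D : Finset V) (hsep : IsSep G C D) (hord : (C ∩ D).card < k) :
    (C, D) ∈ τ ↔ ∑ c ∈ C, w c < ∑ d ∈ D, w d := by
  refine ⟨sum_fst_lt_sum_snd_of_mem hw hmax, fun hCD => ?_⟩
  rw [hτ.1 C D hsep hord]
  exact fun hDC => lt_asymm hCD (sum_fst_lt_sum_snd_of_mem hw hmax hDC)
end

section
/- Let M ∈ ℝ^{n×n}, n ≥ 1, satisfy m_{ij} + m_{ji} > 0 for all i ≠ j and m_{ii} = 0 for all i. Then there exists a vector x ∈ ℝⁿ with x ≥ 0 entrywise such that either Mx > 0 entrywise, or there is exactly one coordinate i with (Mx)ᵢ = 0 while (Mx)ⱼ > 0 for all j ≠ i. -/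
open Finset Matrix

lemma skew_quad_zero {n : ℕ} (K : Matrix (Fin n) (Fin n) ℝ)
    (hK : ∀ i j, K i j = - K j i) (c : Fin n → ℝ) :
    c ⬝ᵥ K.mulVec c = 0 := by
  have hexp : c ⬝ᵥ K.mulVec c = ∑ i, ∑ j, c i * K i j * c j := by
    simp [dotProduct, Matrix.mulVec, Finset.mul_sum, mul_assoc]
  have hsum : (∑ i, ∑ j, c i * K i j * c j) + (∑ i, ∑ j, c i * K i j * c j) = 0 := by
    conv_lhs => rw [show (∑ i, ∑ j, c i * K i j * c j) + (∑ i, ∑ j, c i * K i j * c j)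
      = (∑ i, ∑ j, c i * K i j * c j) + (∑ j, ∑ i, c i * K i j * c j) from by rw [Finset.sum_comm]]
    rw [← Finset.sum_add_distrib]
    apply Finset.sum_eq_zero
    intro i _
    rw [← Finset.sum_add_distrib]
    apply Finset.sum_eq_zero
    intro j _
    rw [hK i j]; ring
  rw [hexp]; linarith

lemma exists_simplex_skew {n : ℕ} (hn : 0 < n) (K : Matrix (Fin n) (Fin n) ℝ)
    (hK : ∀ i j, K i j = - K j i) :
    ∃ x : Fin n → ℝ, (∀ i, 0 ≤ x i) ∧ (∑ i, x i = 1) ∧ ∀ i, 0 ≤ K.mulVec x i := by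
  by_contra hcon
  push_neg at hcon
  set D : Set (Fin n → ℝ) := K.mulVecLin '' stdSimplex ℝ (Fin n) with hD
  set O : Set (Fin n → ℝ) := {y | ∀ i, 0 ≤ y i} with hO
  have hDco : Convex ℝ D := (convex_stdSimplex ℝ (Fin n)).linear_image K.mulVecLin
  have hDcp : IsCompact D :=
    (isCompact_stdSimplex ℝ (Fin n)).image K.mulVecLin.continuous_of_finiteDimensional
  have hOcl : IsClosed O := by
    have : O = ⋂ i, {y : Fin n → ℝ | 0 ≤ y i} := by
      ext y; simp [hO, Set.mem_iInter]
    rw [this]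
    exact isClosed_iInter fun i => isClosed_le continuous_const (continuous_apply i)
  have hOco : Convex ℝ O := by
    intro a ha b hb s t hs ht _ i
    exact add_nonneg (mul_nonneg hs (ha i)) (mul_nonneg ht (hb i))
  have hdisj : Disjoint D O := by
    rw [Set.disjoint_left]
    rintro y ⟨x, hx, rfl⟩ hy
    obtain ⟨i, hi⟩ := hcon x hx.1 hx.2
    exact absurd (hy i) (not_le.2 hi)
  obtain ⟨f, u, v, hfu, huv, hfv⟩ :=
    geometric_hahn_banach_compact_closed hDco hDcp hOco hOcl hdisj
  have hv0 : v < 0 := by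
    have := hfv 0 (fun i => le_refl 0)
    simpa using this
  set c : Fin n → ℝ := fun i => f (Pi.single i 1) with hc
  have hsingle_mem : ∀ i : Fin n, (Pi.single i 1 : Fin n → ℝ) ∈ O := by
    intro i j
    rcases eq_or_ne j i with rfl | h
    · simp
    · simp [Pi.single_apply, h]
  have hcnn : ∀ i, 0 ≤ c i := by
    intro i
    by_contra hneg
    push_neg at hneg
    set t : ℝ := (v - 1) / c i with ht
    have htpos : 0 < t := div_pos_of_neg_of_neg (by linarith) hneg
    have hmem : t • (Pi.single i 1 : Fin n → ℝ) ∈ O := by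
      intro j
      exact mul_nonneg htpos.le (hsingle_mem i j)
    have h1 := hfv _ hmem
    rw [_root_.map_smul, smul_eq_mul] at h1
    have h2 : t * c i = v - 1 := by
      rw [ht]; exact div_mul_cancel₀ _ hneg.ne
    rw [show f (Pi.single i 1) = c i from rfl, h2] at h1
    linarith
  have hf : ∀ y : Fin n → ℝ, f y = ∑ i, y i * c i := by
    intro y
    have hy : y = ∑ i, y i • (Pi.single i 1 : Fin n → ℝ) := by
      have h := Finset.univ_sum_single y
      rw [← h]
      apply Finset.sum_congr rfl
      intro i _
      funext j
      rcases eq_or_ne j i with rfl | hne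
      · simp
      · simp [Pi.single_apply, hne.symm, hne]
    conv_lhs => rw [hy]
    rw [map_sum]
    simp [hc]
  rcases ((Finset.sum_nonneg (s := Finset.univ) (fun i _ => hcnn i)).eq_or_lt.imp Eq.symm id) with hs | hs
  · -- all c i = 0, f vanishes on everything
    have hz : ∑ i, c i = 0 := by exact hs
    have hall : ∀ i, c i = 0 := by
      intro i
      have := (Finset.sum_eq_zero_iff_of_nonneg (fun i _ => hcnn i)).mp hz
      exact this i (Finset.mem_univ i)
    have hx0 : (Pi.single (⟨0, hn⟩ : Fin n) 1 : Fin n → ℝ) ∈ stdSimplex ℝ (Fin n) := by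
      constructor
      · exact hsingle_mem _
      · simp [Finset.sum_pi_single']
    have := hfu _ ⟨_, hx0, rfl⟩
    rw [show (K.mulVecLin (Pi.single (⟨0, hn⟩ : Fin n) 1)) = K.mulVec (Pi.single (⟨0, hn⟩ : Fin n) 1) from rfl] at this
    rw [hf] at this
    simp [hall] at this
    linarith
  · set s := ∑ i, c i with hsdef
    set x : Fin n → ℝ := s⁻¹ • c with hx
    have hxmem : x ∈ stdSimplex ℝ (Fin n) := by
      constructor
      · intro i; exact mul_nonneg (inv_nonneg.2 hs.le) (hcnn i)
      · simp [hx, ← Finset.mul_sum, ← hsdef, inv_mul_cancel₀ hs.ne']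
    have hlt := hfu _ ⟨x, hxmem, rfl⟩
    have hzero : f (K.mulVecLin x) = 0 := by
      rw [show K.mulVecLin x = K.mulVec x from rfl, hf]
      have : ∑ i, K.mulVec x i * c i = c ⬝ᵥ K.mulVec x := by
        simp [dotProduct, mul_comm]
      rw [this, hx, Matrix.mulVec_smul, dotProduct_smul, skew_quad_zero K hK c]
      simp
    rw [hzero] at hlt
    linarith

theorem stmt7 (n : ℕ) (M : Matrix (Fin n) (Fin n) ℝ)
    (hoff : ∀ i j, i ≠ j → 0 < M i j + M j i) (hdiag : ∀ i, M i i = 0) :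
    ∃ x : Fin n → ℝ, (∀ i, 0 ≤ x i) ∧
      ((∀ i, 0 < M.mulVec x i) ∨
        ∃ i, M.mulVec x i = 0 ∧ ∀ j, j ≠ i → 0 < M.mulVec x j) := by
  rcases Nat.eq_zero_or_pos n with hn | hn
  · subst hn
    exact ⟨0, fun i => le_refl 0, Or.inl (fun i => i.elim0)⟩
  · set K : Matrix (Fin n) (Fin n) ℝ := fun i j => (M i j - M j i) / 2 with hKdef
    have hKskew : ∀ i j, K i j = -K j i := by
      intro i j; simp only [hKdef]; ring
    obtain ⟨x, hxnn, hxsum, hKx⟩ := exists_simplex_skew hn K hKskew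
    refine ⟨x, hxnn, ?_⟩
    set S : Matrix (Fin n) (Fin n) ℝ := fun i j => (M i j + M j i) / 2 with hSdef
    have hMsplit : ∀ i, M.mulVec x i = S.mulVec x i + K.mulVec x i := by
      intro i
      simp only [Matrix.mulVec, dotProduct, hSdef, hKdef, ← Finset.sum_add_distrib]
      apply Finset.sum_congr rfl
      intro j _; ring
    have hSterm : ∀ i j, j ≠ i → 0 < x j → 0 < S.mulVec x i := by
      intro i j hji hxj
      show 0 < ∑ l, S i l * x l
      apply Finset.sum_pos'
      · intro l _
        rcases eq_or_ne l i with rfl | hl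
        · simp only [hSdef]
          rw [hdiag l]
          simp
        · exact mul_nonneg (by
            have := hoff i l (Ne.symm hl)
            simp only [hSdef]
            linarith) (hxnn l)
      · refine ⟨j, Finset.mem_univ j, ?_⟩
        apply mul_pos _ hxj
        have := hoff i j (Ne.symm hji)
        simp only [hSdef]
        linarith
    obtain ⟨k, hk⟩ : ∃ k, 0 < x k := by
      by_contra h
      push_neg at h
      have hz : ∀ i, x i = 0 := fun i => le_antisymm (h i) (hxnn i)
      rw [Finset.sum_congr rfl (fun i _ => hz i)] at hxsum
      simp at hxsum
    by_cases hB : ∀ j, j ≠ k → x j = 0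
    · right
      refine ⟨k, ?_, ?_⟩
      · show (∑ j, M k j * x j) = 0
        rw [Finset.sum_eq_single k]
        · rw [hdiag k]; ring
        · intro j _ hj
          rw [hB j hj]; ring
        · intro h; exact absurd (Finset.mem_univ k) h
      · intro j hjk
        rw [hMsplit j]
        have h1 := hSterm j k (Ne.symm hjk) hk
        linarith [hKx j]
    · left
      push_neg at hB
      obtain ⟨j0, hj0k, hj0⟩ := hB
      have hxj0 : 0 < x j0 := (hxnn j0).lt_of_ne (Ne.symm hj0)
      intro i
      rw [hMsplit i]
      have hpos : 0 < S.mulVec x i := by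
        rcases eq_or_ne i k with rfl | hik
        · exact hSterm i j0 hj0k hxj0
        · exact hSterm i k (Ne.symm hik) hk
      linarith [hKx i]
end
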